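/- Let x : ℝ → ℝ and u : ℝ → ℝ be three times continuously differentiable in a neighbourhood of ξ₀ and of x(ξ₀) respectively, with x'(ξ₀) ≠ 0. Then the non-standard central difference formula for the first derivative is second order accurate: as h → 0, [u(x(ξ₀ + h/2)) − u(x(ξ₀ − h/2))] / [2·(x(ξ₀ + h/4) − x(ξ₀ − h/4))] − u'(x(ξ₀)) = O(h²). -/

import Mathlib

open Filter Asymptotics Topology Set

/-!
The numerator and the denominator are central differences, of `u ∘ x` with step `h / 2` and of
`x` with step `h / 4`. For a `C³` function `f`, `φ(h) = f(a + h) - f(a - h) - 2 h f'(a)` satisfies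
`φ(0) = φ'(0) = 0` and `φ''(h) = f''(a + h) - f''(a - h) = O(h)`, so two applications of the mean
value theorem give `φ = O(h³)`. Hence the numerator is `u'(x ξ₀) x'(ξ₀) h + O(h³)` and the
denominator `x'(ξ₀) h + O(h³)`; as `x'(ξ₀) ≠ 0` the denominator is comparable to `h`, and
dividing by it costs one power of `h`.
-/

theorem ContDiffAt.eventually_hasDerivAt {𝕜 F : Type*} [NontriviallyNormedField 𝕜]
    [NormedAddCommGroup F] [NormedSpace 𝕜 F] {f : 𝕜 → F} {a : 𝕜} {n : WithTop ℕ∞}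
    (hf : ContDiffAt 𝕜 n f a) (hn : 1 ≤ n) : ∀ᶠ y in 𝓝 a, HasDerivAt f (deriv f y) y :=
  ((hf.of_le hn).eventually (by simp)).mono fun _ hy => (hy.differentiableAt one_ne_zero).hasDerivAt

section CentralDifference

variable {E : Type*} [NormedAddCommGroup E] [NormedSpace ℝ E]

theorem isBigO_sub_pow_succ_of_hasDerivAt {f f' : ℝ → E} {x₀ : ℝ} {n : ℕ}
    (hff' : ∀ᶠ x in 𝓝 x₀, HasDerivAt f (f' x) x) (hf' : f' =O[𝓝 x₀] fun x => (x - x₀) ^ n) :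
    (fun x => f x - f x₀) =O[𝓝 x₀] fun x => (x - x₀) ^ (n + 1) := by
  obtain ⟨C, hC₀, hC⟩ := hf'.exists_nonneg
  have hsegment := (convex_univ (𝕜 := ℝ)).eventually_nhdsWithin_segment (mem_univ x₀)
    (by rw [nhdsWithin_univ]; exact hff'.and hC.bound : ∀ᶠ y in 𝓝[univ] x₀,
      HasDerivAt f (f' y) y ∧ ‖f' y‖ ≤ C * ‖(y - x₀) ^ n‖)
  rw [nhdsWithin_univ] at hsegment
  refine isBigO_iff.2 ⟨C, ?_⟩
  filter_upwards [hsegment] with x hx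
  have bound : ∀ y ∈ segment ℝ x₀ x, ‖f' y‖ ≤ C * ‖(x - x₀) ^ n‖ := fun y hy => by
    refine (hx y hy).2.trans ?_
    simp only [norm_pow]
    gcongr
    exact norm_sub_le_of_mem_segment hy
  have := (convex_segment x₀ x).norm_image_sub_le_of_norm_hasDerivWithin_le
    (fun y hy => (hx y hy).1.hasDerivWithinAt) bound
    (left_mem_segment ℝ x₀ x) (right_mem_segment ℝ x₀ x)
  simpa [pow_succ, mul_assoc] using this

theorem ContDiffAt.isBigO_centralDifference {f : ℝ → E} {a : ℝ} (hf : ContDiffAt ℝ 3 f a) :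
    (fun h => f (a + h) - f (a - h) - (2 * h) • deriv f a) =O[𝓝 0] fun h => h ^ 3 := by
  have hf₁ : ContDiffAt ℝ 2 (deriv f) a := hf.derivWithin (by norm_num)
  have hf₂ : ContDiffAt ℝ 1 (deriv (deriv f)) a := hf₁.derivWithin (by norm_num)
  have hplus : Tendsto (a + ·) (𝓝 0) (𝓝 a) := by
    simpa using (continuous_const_add a).tendsto 0
  have hminus : Tendsto (a - ·) (𝓝 0) (𝓝 a) := by
    simpa using (continuous_sub_left a).tendsto 0
  have hd₁ : ∀ᶠ h in 𝓝 0, HasDerivAt (fun h => f (a + h) - f (a - h) - (2 * h) • deriv f a)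
      (deriv f (a + h) + deriv f (a - h) - (2 : ℝ) • deriv f a) h := by
    filter_upwards [hplus.eventually (hf.eventually_hasDerivAt (by norm_num)),
      hminus.eventually (hf.eventually_hasDerivAt (by norm_num))] with h hp hm
    exact (((hp.comp_const_add a h).sub (hm.comp_const_sub a h)).sub
      (((hasDerivAt_id h).const_mul 2).smul_const (deriv f a))).congr_deriv (by simp)
  have hd₂ : ∀ᶠ h in 𝓝 0, HasDerivAt
      (fun h => deriv f (a + h) + deriv f (a - h) - (2 : ℝ) • deriv f a)
      (deriv (deriv f) (a + h) - deriv (deriv f) (a - h)) h := by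
    filter_upwards [hplus.eventually (hf₁.eventually_hasDerivAt (by norm_num)),
      hminus.eventually (hf₁.eventually_hasDerivAt (by norm_num))] with h hp hm
    exact (((hp.comp_const_add a h).add (hm.comp_const_sub a h)).sub_const _).congr_deriv
      (sub_eq_add_neg _ _).symm
  have hO := (hf₂.differentiableAt one_ne_zero).isBigO_sub
  have h₂ : (fun h => deriv (deriv f) (a + h) - deriv (deriv f) (a - h)) =O[𝓝 0]
      fun h => (h - 0) ^ 1 := by
    have hp := (hO.comp_tendsto hplus).congr_right (fun h => by simp : ∀ h, a + h - a = (h - 0) ^ 1)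
    have hm := isBigO_neg_right.1 <|
      (hO.comp_tendsto hminus).congr_right (fun h => by simp : ∀ h, a - h - a = -(h - 0) ^ 1)
    simpa [Function.comp_def] using hp.sub hm
  have h₁ : (fun h => deriv f (a + h) + deriv f (a - h) - (2 : ℝ) • deriv f a) =O[𝓝 0]
      fun h => (h - 0) ^ 2 := by
    simpa [two_smul] using isBigO_sub_pow_succ_of_hasDerivAt hd₂ h₂
  simpa using isBigO_sub_pow_succ_of_hasDerivAt hd₁ h₁

end CentralDifference

theorem Asymptotics.IsBigO.comp_div_const {𝕜 F : Type*} [NormedField 𝕜] [Norm F] {f : 𝕜 → F}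
    {n : ℕ} (hf : f =O[𝓝 0] fun h => h ^ n) (c : 𝕜) :
    (fun h => f (h / c)) =O[𝓝 0] fun h => h ^ n :=
  (hf.comp_tendsto ((continuous_id.div_const c).tendsto' 0 0 (zero_div c))).trans <|
    ((isBigO_refl (fun h : 𝕜 => h ^ n) _).const_mul_left (c ^ n)⁻¹).congr_left fun h => by
      simp [mul_pow, div_eq_inv_mul]

theorem isBigO_div_sub_div_of_sub_mul {𝕜 : Type*} [NormedField 𝕜] {N D : 𝕜 → 𝕜} {p q : 𝕜}
    {k : ℕ} (hq : q ≠ 0)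
    (hN : (fun h => N h - p * h) =O[𝓝 0] fun h => h ^ (k + 2))
    (hD : (fun h => D h - q * h) =O[𝓝 0] fun h => h ^ (k + 2)) :
    (fun h => N h / D h - p / q) =O[𝓝[≠] 0] fun h => h ^ (k + 1) := by
  have hD_equiv : D ~[𝓝 0] fun h => q * h :=
    (hD.trans_isLittleO ((isLittleO_pow_id (by omega)).trans_isBigO
      (isBigO_self_const_mul hq _ _))).isEquivalent
  have hid : (fun h => h) =O[𝓝[≠] 0] D :=
    ((isBigO_self_const_mul hq _ _).trans hD_equiv.isBigO_symm).mono nhdsWithin_le_nhds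
  have hDne : ∀ᶠ h in 𝓝[≠] 0, D h ≠ 0 :=
    (hid.eq_zero_imp.and eventually_mem_nhdsWithin).mono fun h ⟨himp, hh⟩ hD0 => hh (himp hD0)
  have hDinv : (fun h => (D h)⁻¹) =O[𝓝[≠] 0] fun h => h⁻¹ :=
    hid.inv_rev (eventually_mem_nhdsWithin.mono fun h hh h0 => absurd h0 hh)
  have hnum : (fun h => N h - p / q * D h) =O[𝓝 0] fun h => h ^ (k + 2) :=
    (hN.sub (hD.const_mul_left (p / q))).congr_left fun h => by field_simp; ring
  refine ((hnum.mono nhdsWithin_le_nhds).mul hDinv).congr' ?_ ?_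
  · filter_upwards [hDne] with h hh
    field_simp
  · filter_upwards [eventually_mem_nhdsWithin] with h hh
    field_simp [show h ≠ 0 from hh]
    ring

/-- The non-standard central difference formula for the first derivative on a
quasi-uniform grid is second order accurate: as `h → 0`,
`[u(x(ξ₀+h/2)) − u(x(ξ₀−h/2))] / [2(x(ξ₀+h/4) − x(ξ₀−h/4))] − u'(x(ξ₀)) = O(h²)`. -/
theorem nonstandard_first_derivative_second_order (x u : ℝ → ℝ) (ξ₀ : ℝ)
    (hx : ContDiffAt ℝ 3 x ξ₀) (hu : ContDiffAt ℝ 3 u (x ξ₀))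
    (hx' : deriv x ξ₀ ≠ 0) :
    (fun h : ℝ =>
        (u (x (ξ₀ + h / 2)) - u (x (ξ₀ - h / 2))) /
            (2 * (x (ξ₀ + h / 4) - x (ξ₀ - h / 4))) -
          deriv u (x ξ₀)) =O[nhdsWithin 0 {(0 : ℝ)}ᶜ] fun h : ℝ => h ^ 2 := by
  have hchain : deriv (u ∘ x) ξ₀ = deriv u (x ξ₀) * deriv x ξ₀ :=
    deriv_comp _ (hu.differentiableAt (by norm_num)) (hx.differentiableAt (by norm_num))
  have hN : (fun h => u (x (ξ₀ + h / 2)) - u (x (ξ₀ - h / 2)) -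
      deriv u (x ξ₀) * deriv x ξ₀ * h) =O[𝓝 0] fun h => h ^ 3 :=
    ((hu.comp ξ₀ hx).isBigO_centralDifference.comp_div_const 2).congr_left fun h => by
      simp only [hchain, smul_eq_mul, Function.comp_apply]
      ring
  have hD : (fun h => 2 * (x (ξ₀ + h / 4) - x (ξ₀ - h / 4)) - deriv x ξ₀ * h)
      =O[𝓝 0] fun h => h ^ 3 :=
    ((hx.isBigO_centralDifference.comp_div_const 4).const_mul_left 2).congr_left fun h => by
      rw [smul_eq_mul]
      ring
  have key := isBigO_div_sub_div_of_sub_mul hx' hN hD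
  rwa [mul_div_cancel_right₀ _ hx'] at key
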